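/- arXiv:0805.4536 — 3 statements merged into one kernel-verified Lean document; each statement's English description precedes it below -/
import Mathlib

section
/- Von Neumann's condition holds for the Banach-*-algebra quantization: $\lim_{\hbar \to 0} \|\mu \star_\hbar \nu - \mu \star_0 \nu\|_1 = 0$ for all finite complex Borel measures $\mu, \nu$ on $E$, where $\star_0$ is the ordinary convolution. -/
open MeasureTheory Complex Filter

/-! The difference `μ ⋆_ħ ν - μ ⋆_0 ν` is the push-forward under `(f, g) ↦ f + g` of the
complex measure with density `(e^{-(i/2)ħσ(f,g)} - 1) dμ(f) dν(g)` on `E × E`, so its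
total variation is at most `∫∫ |e^{-(i/2)ħσ(f,g)} - 1| d|μ|(f) d|ν|(g)`. This tends to `0`
as `ħ → 0` by dominated convergence, the integrand being bounded by `2` on a finite
measure space. -/

/-- A finite complex Borel measure, represented by its variation measure
together with a density of modulus one (polar decomposition). -/
structure CMeasure (E : Type*) [MeasurableSpace E] where
  var : MeasureTheory.Measure E
  finite : MeasureTheory.IsFiniteMeasure var
  density : E → ℂ
  meas_density : Measurable density
  norm_density : ∀ f, ‖density f‖ = 1

namespace CMeasure

/-- The value `μ(Λ)` of the complex measure on a set `Λ`. -/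
noncomputable def val {E : Type*} [MeasurableSpace E] (μ : CMeasure E) (Λ : Set E) : ℂ :=
  ∫ f in Λ, μ.density f ∂μ.var

/-- The integral `∫ a dμ` of a complex function against the complex measure. -/
noncomputable def integral {E : Type*} [MeasurableSpace E] (μ : CMeasure E) (a : E → ℂ) : ℂ :=
  ∫ f, a f * μ.density f ∂μ.var

/-- The total variation norm `‖μ‖₁ = |μ|(E)`. -/
noncomputable def norm1 {E : Type*} [MeasurableSpace E] (μ : CMeasure E) : ℝ :=
  (μ.var Set.univ).toReal

end CMeasure

/-- The set of partial sums `∑ ‖φ(Λ_k)‖` over finite disjoint families of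
measurable sets, whose supremum is the total variation norm of the set function `φ`. -/
def tvSet {E : Type*} [MeasurableSpace E] (φ : Set E → ℂ) : Set ℝ :=
  { r | ∃ (n : ℕ) (Λ : Fin n → Set E), (∀ i, MeasurableSet (Λ i)) ∧
      Pairwise (Function.onFun Disjoint Λ) ∧ r = ∑ i, ‖φ (Λ i)‖ }

/-- The total variation norm of a complex set function. -/
noncomputable def tvNorm {E : Type*} [MeasurableSpace E] (φ : Set E → ℂ) : ℝ :=
  sSup (tvSet φ)

/-- Complex-valued indicator function of a set. -/
noncomputable def cind {E : Type*} (Λ : Set E) (h : E) : ℂ :=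
  Set.indicator Λ (fun _ => (1 : ℂ)) h

/-- Twisted convolution `(μ ⋆_hb ν)(Λ) = ∫∫ e^{-(i/2)hbσ(f,g)} 1_Λ(f+g) dμ(f) dν(g)`,
as a set function. -/
noncomputable def twistVal {E : Type*} [MeasurableSpace E] [Add E]
    (σ : E → E → ℝ) (hb : ℝ) (μ ν : CMeasure E) (Λ : Set E) : ℂ :=
  μ.integral fun f => ν.integral fun g =>
    Complex.exp (-(Complex.I / 2) * (hb : ℂ) * (σ f g : ℂ)) * cind Λ (f + g)

/-- Poisson bracket `{μ,ν}₀(Λ) = ∫∫ σ(f,g) 1_Λ(f+g) dμ(f) dν(g)`, as a set function. -/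
noncomputable def pbVal {E : Type*} [MeasurableSpace E] [Add E]
    (σ : E → E → ℝ) (μ ν : CMeasure E) (Λ : Set E) : ℂ :=
  μ.integral fun f => ν.integral fun g => ((σ f g : ℝ) : ℂ) * cind Λ (f + g)

open Topology

noncomputable def phase (t r : ℝ) : ℂ :=
  Complex.exp (-(Complex.I / 2) * t * r)

lemma norm_phase (t r : ℝ) : ‖phase t r‖ = 1 := by
  rw [phase, Complex.norm_exp]
  simp

lemma phase_zero_left (r : ℝ) : phase 0 r = 1 := by
  simp [phase]

lemma continuous_phase_left (r : ℝ) : Continuous fun t => phase t r := by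
  unfold phase
  fun_prop

lemma norm_phase_sub_one_le (t r : ℝ) : ‖phase t r - 1‖ ≤ 2 :=
  (norm_sub_le _ _).trans (by rw [norm_phase, norm_one]; norm_num)

lemma Measurable.phase {α : Type*} [MeasurableSpace α] {s : α → ℝ} (hs : Measurable s)
    (t : ℝ) :
    Measurable fun x => phase t (s x) :=
  Complex.measurable_exp.comp ((Complex.measurable_ofReal.comp hs).const_mul _)

section PhaseIntegral

variable {α : Type*} [MeasurableSpace α] (M : Measure α) [IsFiniteMeasure M] {s : α → ℝ}

lemma integrable_norm_phase_sub_one (hs : Measurable s) (t : ℝ) :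
    Integrable (fun x => ‖phase t (s x) - 1‖) M :=
  .of_bound ((hs.phase t).sub measurable_const).norm.aestronglyMeasurable 2
    (.of_forall fun x => by simpa using norm_phase_sub_one_le t (s x))

lemma tendsto_integral_norm_phase_sub_one (hs : Measurable s) :
    Tendsto (fun t => ∫ x, ‖phase t (s x) - 1‖ ∂M) (𝓝 0) (𝓝 0) := by
  have h := tendsto_integral_filter_of_dominated_convergence (fun _ => (2 : ℝ))
    (.of_forall fun t => (integrable_norm_phase_sub_one M hs t).aestronglyMeasurable)
    (.of_forall fun t => .of_forall fun x => by simpa using norm_phase_sub_one_le t (s x))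
    (integrable_const 2)
    (.of_forall fun x => ((continuous_phase_left (s x)).sub continuous_const).norm.tendsto' 0 0
      (by simp [phase_zero_left]))
  simpa using h

end PhaseIntegral

lemma norm_cind_le {E : Type*} (Λ : Set E) (x : E) : ‖cind Λ x‖ ≤ 1 := by
  unfold cind
  by_cases h : x ∈ Λ <;> simp [h]

section TotalVariation

variable {E α : Type*} [MeasurableSpace E] [MeasurableSpace α]

lemma tvNorm_nonneg (φ : Set E → ℂ) : 0 ≤ tvNorm φ :=
  Real.sSup_nonneg <| by
    rintro _ ⟨n, Λ, -, -, rfl⟩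
    positivity

lemma tvNorm_le_integral {M : Measure α} {s : α → E} (hs : Measurable s) {w : α → ℝ}
    (hw : Integrable w M) (hw_nonneg : 0 ≤ᵐ[M] w) {φ : Set E → ℂ}
    (hφ : ∀ Λ, MeasurableSet Λ → ‖φ Λ‖ ≤ ∫ x in s ⁻¹' Λ, w x ∂M) :
    tvNorm φ ≤ ∫ x, w x ∂M := by
  refine Real.sSup_le ?_ (integral_nonneg_of_ae hw_nonneg)
  rintro _ ⟨n, Λ, hΛ, hdisj, rfl⟩
  calc ∑ i, ‖φ (Λ i)‖ ≤ ∑ i, ∫ x in s ⁻¹' Λ i, w x ∂M :=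
        Finset.sum_le_sum fun i _ => hφ _ (hΛ i)
    _ = ∫ x in ⋃ i, s ⁻¹' Λ i, w x ∂M :=
        (integral_iUnion_fintype (fun i => hs (hΛ i)) (fun i j hij => (hdisj hij).preimage s)
          fun _ => hw.integrableOn).symm
    _ ≤ ∫ x, w x ∂M := setIntegral_le_integral hw hw_nonneg

end TotalVariation

namespace CMeasure

variable {E F : Type*} [MeasurableSpace E] [MeasurableSpace F]

lemma integrable_mul_density (μ : CMeasure E) (ν : CMeasure F) {M : Measure (E × F)}
    {a : E × F → ℂ} (ha : Integrable a M) :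
    Integrable (fun p => a p * (μ.density p.1 * ν.density p.2)) M :=
  ha.mul_bdd (c := 1) ((μ.meas_density.comp measurable_fst).mul
      (ν.meas_density.comp measurable_snd)).aestronglyMeasurable
    (.of_forall fun p => by simp [μ.norm_density, ν.norm_density])

lemma integral_integral_eq_integral_prod (μ : CMeasure E) (ν : CMeasure F) {a : E × F → ℂ}
    (ha : Integrable a (μ.var.prod ν.var)) :
    μ.integral (fun f => ν.integral fun g => a (f, g)) =
      ∫ p, a p * (μ.density p.1 * ν.density p.2) ∂(μ.var.prod ν.var) := by
  have := μ.finite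
  have := ν.finite
  rw [integral_prod _ (μ.integrable_mul_density ν ha)]
  refine integral_congr_ae (.of_forall fun f => ?_)
  simp only [integral, ← integral_mul_const]
  congr 1
  ext g
  ring

end CMeasure

section TwistedConvolution

variable {E : Type*} [MeasurableSpace E] [Add E] [MeasurableAdd₂ E] {σ : E → E → ℝ}
  (hσ : Measurable fun p : E × E => σ p.1 p.2) (μ ν : CMeasure E) {Λ : Set E}
include hσ

lemma integrable_phase_mul_cind (M : Measure (E × E)) [IsFiniteMeasure M] (t : ℝ)
    (hΛ : MeasurableSet Λ) :
    Integrable (fun p : E × E => phase t (σ p.1 p.2) * cind Λ (p.1 + p.2)) M :=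
  .of_bound ((hσ.phase t).mul
      ((measurable_const.indicator hΛ).comp measurable_add)).aestronglyMeasurable 1
    (.of_forall fun p => by simpa [norm_phase] using norm_cind_le Λ (p.1 + p.2))

lemma twistVal_eq_integral_prod (t : ℝ) (hΛ : MeasurableSet Λ) :
    twistVal σ t μ ν Λ = ∫ p, phase t (σ p.1 p.2) * cind Λ (p.1 + p.2) *
      (μ.density p.1 * ν.density p.2) ∂(μ.var.prod ν.var) :=
  have := μ.finite
  have := ν.finite
  μ.integral_integral_eq_integral_prod ν (integrable_phase_mul_cind hσ _ t hΛ)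

lemma twistVal_sub_twistVal_zero (t : ℝ) (hΛ : MeasurableSet Λ) :
    twistVal σ t μ ν Λ - twistVal σ 0 μ ν Λ =
      ∫ p, (phase t (σ p.1 p.2) - 1) * cind Λ (p.1 + p.2) *
        (μ.density p.1 * ν.density p.2) ∂(μ.var.prod ν.var) := by
  have := μ.finite
  have := ν.finite
  have hint (t : ℝ) :=
    μ.integrable_mul_density ν (integrable_phase_mul_cind hσ (μ.var.prod ν.var) t hΛ)
  rw [twistVal_eq_integral_prod hσ μ ν t hΛ, twistVal_eq_integral_prod hσ μ ν 0 hΛ,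
    ← integral_sub (hint t) (hint 0)]
  simp only [phase_zero_left]
  congr 1
  ext p
  ring

lemma norm_twistVal_sub_twistVal_zero_le (t : ℝ) (hΛ : MeasurableSet Λ) :
    ‖twistVal σ t μ ν Λ - twistVal σ 0 μ ν Λ‖ ≤
      ∫ p in (fun p : E × E => p.1 + p.2) ⁻¹' Λ, ‖phase t (σ p.1 p.2) - 1‖
        ∂(μ.var.prod ν.var) := by
  rw [twistVal_sub_twistVal_zero hσ μ ν t hΛ, ← integral_indicator (measurable_add hΛ)]
  refine (norm_integral_le_integral_norm _).trans_eq (integral_congr_ae (.of_forall fun p => ?_))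
  by_cases hp : p.1 + p.2 ∈ Λ <;> simp [cind, hp, μ.norm_density, ν.norm_density]

end TwistedConvolution

theorem von_neumann_condition_measures_general
    {E : Type*} [AddCommGroup E] [Module ℝ E] [MeasurableSpace E] [MeasurableAdd₂ E]
    (σ : E →ₗ[ℝ] E →ₗ[ℝ] ℝ)
    (hσ_meas : Measurable fun p : E × E => σ p.1 p.2)
    (μ ν : CMeasure E) :
    Filter.Tendsto (fun hb : ℝ =>
        tvNorm (fun Λ : Set E =>
          twistVal (fun a b => σ a b) hb μ ν Λ - twistVal (fun a b => σ a b) 0 μ ν Λ))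
      (nhds 0) (nhds 0) := by
  have := μ.finite
  have := ν.finite
  refine tendsto_of_tendsto_of_tendsto_of_le_of_le tendsto_const_nhds
    (tendsto_integral_norm_phase_sub_one (μ.var.prod ν.var) hσ_meas)
    (fun t => tvNorm_nonneg _) fun t => ?_
  exact tvNorm_le_integral measurable_add
    (integrable_norm_phase_sub_one (μ.var.prod ν.var) hσ_meas t)
    (.of_forall fun _ => norm_nonneg _)
    fun Λ hΛ => norm_twistVal_sub_twistVal_zero_le hσ_meas μ ν t hΛ

/-- von Neumann's condition in the measure Banach-*-algebras:
`lim_{ħ→0} ‖μ ⋆_ħ ν - μ ⋆_0 ν‖₁ = 0`, where `⋆_0` is the ordinary convolution. -/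
theorem von_neumann_condition_measures
    {E : Type*} [AddCommGroup E] [Module ℝ E] [MeasurableSpace E] [MeasurableAdd₂ E]
    (σ : E →ₗ[ℝ] E →ₗ[ℝ] ℝ) (hσ_anti : ∀ f g : E, σ f g = - σ g f)
    (hσ_meas : Measurable fun p : E × E => σ p.1 p.2)
    (μ ν : CMeasure E) :
    Filter.Tendsto (fun hb : ℝ =>
        tvNorm (fun Λ : Set E =>
          twistVal (fun a b => σ a b) hb μ ν Λ - twistVal (fun a b => σ a b) 0 μ ν Λ))
      (nhds 0) (nhds 0) :=
  von_neumann_condition_measures_general σ hσ_meas μ ν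
end

section
/- Let $\kappa$ be a seminorm on $E$, $n \in \mathbb{N}$, and let $\mu, \nu$ be finite complex Borel measures with finite $\kappa$-moments up to order $n$, i.e. $\int_E \kappa(f)^m\, d|\mu|(f) < \infty$ for all $0 \le m \le n$ (similarly for $\nu$). Then for every $\hbar \in \mathbb{R}$ the twisted convolution $\mu \star_\hbar \nu$ also has finite $\kappa$-moments up to order $n$, and $\|(\mu \star_\hbar \nu)^m_\kappa\|_1 \le \sum_{k=0}^m \binom{m}{k} \|\mu_\kappa^{m-k}\|_1 \|\nu_\kappa^k\|_1$ for $m \le n$, where $d\mu_\kappa^m(f) := \kappa(f)^m\, d\mu(f)$. -/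
open MeasureTheory Complex Filter

/-- The `m`-th κ-moment of the twisted convolution, as a set function:
`(μ ⋆_ħ ν)^m_κ(Λ) = ∫∫ e^{-(i/2)ħσ(f,g)} κ(f+g)^m 1_Λ(f+g) dμ(f) dν(g)`. -/
noncomputable def twistMomentVal {E : Type*} [AddCommGroup E] [Module ℝ E] [MeasurableSpace E]
    (σ : E → E → ℝ) (hb : ℝ) (κ : Seminorm ℝ E) (m : ℕ)
    (μ ν : CMeasure E) (Λ : Set E) : ℂ :=
  μ.integral fun f => ν.integral fun g =>
    Complex.exp (-(Complex.I / 2) * (hb : ℂ) * (σ f g : ℂ))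
      * ((κ (f + g) ^ m : ℝ) : ℂ) * cind Λ (f + g)

/-!
The phase `e^{-(i/2)ħσ(f,g)}` has modulus one, so `|(μ ⋆_ħ ν)^m_κ(Λ)|` is dominated by
`ρ(Λ)`, where `ρ` is the positive measure with density `κ^m` against the convolution `|μ| ∗ |ν|`.
Hence the total variation is at most `ρ(E) = ∫∫ κ(f+g)^m d|μ| d|ν|`, and expanding
`κ(f+g)^m ≤ (κ f + κ g)^m` binomially and integrating with Tonelli gives the bound.
-/

open MeasureTheory Finset
open scoped ENNReal

namespace Seminorm

variable {𝕜 E : Type*} [SeminormedRing 𝕜] [AddGroup E] [SMul 𝕜 E] (p : Seminorm 𝕜 E)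

lemma map_add_pow_le (x y : E) (m : ℕ) :
    p (x + y) ^ m ≤ ∑ k ∈ range (m + 1), (m.choose k : ℝ) * p x ^ (m - k) * p y ^ k :=
  calc p (x + y) ^ m ≤ (p y + p x) ^ m :=
        pow_le_pow_left₀ (apply_nonneg p _) ((map_add_le_add p x y).trans_eq (add_comm _ _)) m
    _ = _ := by rw [add_pow]; exact sum_congr rfl fun k _ => by ring

lemma lintegral_ofReal_pow [MeasurableSpace E] {μ : Measure E} {j : ℕ}
    (h : Integrable (fun x => p x ^ j) μ) :
    ∫⁻ x, ENNReal.ofReal (p x ^ j) ∂μ = ENNReal.ofReal (∫ x, p x ^ j ∂μ) :=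
  (ofReal_integral_eq_lintegral_ofReal h (ae_of_all _ fun x => by positivity)).symm

lemma lintegral_pow_conv_le [MeasurableSpace E] [MeasurableAdd₂ E] (hp : Measurable fun x => p x)
    (μ ν : Measure E) [SFinite ν] (m : ℕ) :
    ∫⁻ x, ENNReal.ofReal (p x ^ m) ∂(μ ∗ ν) ≤ ∑ k ∈ range (m + 1),
      (m.choose k : ℝ≥0∞) * ((∫⁻ x, ENNReal.ofReal (p x ^ (m - k)) ∂μ)
        * ∫⁻ y, ENNReal.ofReal (p y ^ k) ∂ν) := by
  have hmeas (j : ℕ) : Measurable fun x => ENNReal.ofReal (p x ^ j) :=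
    (hp.pow_const j).ennreal_ofReal
  rw [Measure.lintegral_conv_eq_lintegral_sum (hmeas m)]
  calc ∫⁻ z, ENNReal.ofReal (p (z.1 + z.2) ^ m) ∂μ.prod ν
      ≤ ∫⁻ z, ∑ k ∈ range (m + 1), (m.choose k : ℝ≥0∞) *
          (ENNReal.ofReal (p z.1 ^ (m - k)) * ENNReal.ofReal (p z.2 ^ k)) ∂μ.prod ν := by
        refine lintegral_mono fun z =>
          (ENNReal.ofReal_le_ofReal (p.map_add_pow_le _ _ m)).trans_eq ?_
        rw [ENNReal.ofReal_sum_of_nonneg fun k _ => by positivity]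
        refine sum_congr rfl fun k _ => ?_
        rw [mul_assoc, ENNReal.ofReal_mul (by positivity), ENNReal.ofReal_mul (by positivity),
          ENNReal.ofReal_natCast]
    _ = _ := by
        rw [lintegral_finsetSum _ fun k _ => by fun_prop]
        refine sum_congr rfl fun k _ => ?_
        rw [lintegral_const_mul _ (by fun_prop),
          lintegral_prod_mul (hmeas _).aemeasurable (hmeas _).aemeasurable]

end Seminorm

lemma MeasureTheory.Measure.withDensity_conv_apply {E : Type*} [AddMonoid E] [MeasurableSpace E]
    [MeasurableAdd₂ E] (μ ν : Measure E) [SFinite ν] {w : E → ℝ≥0∞} (hw : Measurable w)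
    {Λ : Set E} (hΛ : MeasurableSet Λ) :
    (μ ∗ ν).withDensity w Λ = ∫⁻ x, ∫⁻ y, Λ.indicator w (x + y) ∂ν ∂μ := by
  rw [withDensity_apply _ hΛ, ← lintegral_indicator hΛ,
    Measure.lintegral_conv (hw.indicator hΛ)]

section

variable {E : Type*} [MeasurableSpace E]

lemma ofReal_le_of_mem_tvSet {φ : Set E → ℂ} {ρ : Measure E}
    (hφ : ∀ Λ, MeasurableSet Λ → ‖φ Λ‖ₑ ≤ ρ Λ) {r : ℝ} (hr : r ∈ tvSet φ) :
    ENNReal.ofReal r ≤ ρ Set.univ := by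
  obtain ⟨N, Λ, hΛ, hdisj, rfl⟩ := hr
  calc ENNReal.ofReal (∑ i, ‖φ (Λ i)‖) = ∑ i, ‖φ (Λ i)‖ₑ := by
        rw [ENNReal.ofReal_sum_of_nonneg fun i _ => norm_nonneg _]
        simp only [ofReal_norm]
    _ ≤ ∑ i, ρ (Λ i) := sum_le_sum fun i _ => hφ _ (hΛ i)
    _ = ρ (⋃ i, Λ i) := by rw [measure_iUnion hdisj hΛ, tsum_fintype]
    _ ≤ ρ Set.univ := measure_mono (Set.subset_univ _)

lemma tvNorm_le_of_enorm_le_measure {φ : Set E → ℂ} {ρ : Measure E} [IsFiniteMeasure ρ]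
    (hφ : ∀ Λ, MeasurableSet Λ → ‖φ Λ‖ₑ ≤ ρ Λ) :
    BddAbove (tvSet φ) ∧ tvNorm φ ≤ ρ.real Set.univ := by
  have h : ∀ r ∈ tvSet φ, r ≤ ρ.real Set.univ := fun r hr =>
    (ENNReal.ofReal_le_iff_le_toReal (measure_ne_top _ _)).1 (ofReal_le_of_mem_tvSet hφ hr)
  exact ⟨⟨_, h⟩, Real.sSup_le h measureReal_nonneg⟩

lemma CMeasure.enorm_integral_le (μ : CMeasure E) (a : E → ℂ) :
    ‖μ.integral a‖ₑ ≤ ∫⁻ x, ‖a x‖ₑ ∂μ.var := by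
  refine (enorm_integral_le_lintegral_enorm _).trans_eq (lintegral_congr fun x => ?_)
  rw [enorm_mul, ← ofReal_norm (μ.density x), μ.norm_density, ENNReal.ofReal_one,
    mul_one]

end

lemma enorm_twistMomentVal_le {E : Type*} [AddCommGroup E] [Module ℝ E] [MeasurableSpace E]
    (σ : E → E → ℝ) (hb : ℝ) (κ : Seminorm ℝ E) (m : ℕ) (μ ν : CMeasure E)
    (Λ : Set E) :
    ‖twistMomentVal σ hb κ m μ ν Λ‖ₑ ≤ ∫⁻ f, ∫⁻ g,
      Λ.indicator (fun x => ENNReal.ofReal (κ x ^ m)) (f + g) ∂ν.var ∂μ.var := by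
  refine (μ.enorm_integral_le _).trans (lintegral_mono fun f =>
    (ν.enorm_integral_le _).trans (lintegral_mono fun g => le_of_eq ?_))
  have hphase : ‖Complex.exp (-(Complex.I / 2) * hb * σ f g)‖ₑ = 1 := by
    rw [← ofReal_norm, show -(Complex.I / 2) * hb * σ f g = ↑(-(hb * σ f g / 2)) * Complex.I
      by push_cast; ring, Complex.norm_exp_ofReal_mul_I, ENNReal.ofReal_one]
  by_cases hΛ : f + g ∈ Λ
  · simp only [cind, Set.indicator_of_mem hΛ, mul_one, enorm_mul, hphase, one_mul]
    rw [← ofReal_norm, Complex.norm_real, Real.norm_of_nonneg (by positivity)]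
  · simp [cind, hΛ]

theorem twisted_convolution_moments_general
    {E : Type*} [AddCommGroup E] [Module ℝ E] [MeasurableSpace E] [MeasurableAdd₂ E]
    (σ : E →ₗ[ℝ] E →ₗ[ℝ] ℝ)
    (κ : Seminorm ℝ E) (hκ_meas : Measurable fun f : E => (κ f : ℝ))
    (n : ℕ) (hb : ℝ) (μ ν : CMeasure E)
    (hμ : ∀ m ≤ n, MeasureTheory.Integrable (fun f : E => (κ f : ℝ) ^ m) μ.var)
    (hν : ∀ m ≤ n, MeasureTheory.Integrable (fun g : E => (κ g : ℝ) ^ m) ν.var) :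
    ∀ m ≤ n,
      BddAbove (tvSet (twistMomentVal (fun a b => σ a b) hb κ m μ ν)) ∧
      tvNorm (twistMomentVal (fun a b => σ a b) hb κ m μ ν)
        ≤ ∑ k ∈ Finset.range (m + 1),
            (m.choose k : ℝ) * (∫ f, (κ f : ℝ) ^ (m - k) ∂μ.var)
              * (∫ g, (κ g : ℝ) ^ k ∂ν.var) := by
  intro m hm
  have := μ.finite
  have := ν.finite
  set ρ := (μ.var ∗ ν.var).withDensity fun x => ENNReal.ofReal (κ x ^ m)
  set B := ∑ k ∈ range (m + 1), (m.choose k : ℝ) * (∫ f, κ f ^ (m - k) ∂μ.var)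
      * ∫ g, κ g ^ k ∂ν.var with hB_def
  have hB : 0 ≤ B := by positivity
  have hmass : ρ Set.univ ≤ ENNReal.ofReal B := by
    rw [withDensity_apply _ MeasurableSet.univ, Measure.restrict_univ]
    refine (κ.lintegral_pow_conv_le hκ_meas μ.var ν.var m).trans_eq ?_
    rw [hB_def, ENNReal.ofReal_sum_of_nonneg fun k _ => by positivity]
    refine sum_congr rfl fun k hk => ?_
    have hk : k ≤ n := (Nat.lt_succ_iff.1 (mem_range.1 hk)).trans hm
    rw [κ.lintegral_ofReal_pow (hμ _ ((m.sub_le k).trans hm)), κ.lintegral_ofReal_pow (hν k hk),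
      mul_assoc, ENNReal.ofReal_mul (by positivity), ENNReal.ofReal_mul (by positivity),
      ENNReal.ofReal_natCast]
  have : IsFiniteMeasure ρ := ⟨hmass.trans_lt ENNReal.ofReal_lt_top⟩
  obtain ⟨hbdd, hle⟩ := tvNorm_le_of_enorm_le_measure (ρ := ρ) fun Λ hΛ =>
    (enorm_twistMomentVal_le _ hb κ m μ ν Λ).trans_eq
      (Measure.withDensity_conv_apply _ _ (hκ_meas.pow_const m).ennreal_ofReal hΛ).symm
  exact ⟨hbdd, hle.trans (ENNReal.toReal_le_of_le_ofReal hB hmass)⟩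

/-- if `μ, ν` have finite κ-moments up to order `n`, then so does the
twisted convolution `μ ⋆_ħ ν`, with
`‖(μ⋆_ħν)^m_κ‖₁ ≤ ∑_{k=0}^m (m choose k) ‖μ^{m-k}_κ‖₁ ‖ν^k_κ‖₁` for `m ≤ n`. -/
theorem twisted_convolution_moments
    {E : Type*} [AddCommGroup E] [Module ℝ E] [MeasurableSpace E] [MeasurableAdd₂ E]
    (σ : E →ₗ[ℝ] E →ₗ[ℝ] ℝ) (hσ_anti : ∀ f g : E, σ f g = - σ g f)
    (hσ_meas : Measurable fun p : E × E => σ p.1 p.2)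
    (κ : Seminorm ℝ E) (hκ_meas : Measurable fun f : E => (κ f : ℝ))
    (n : ℕ) (hb : ℝ) (μ ν : CMeasure E)
    (hμ : ∀ m ≤ n, MeasureTheory.Integrable (fun f : E => (κ f : ℝ) ^ m) μ.var)
    (hν : ∀ m ≤ n, MeasureTheory.Integrable (fun g : E => (κ g : ℝ) ^ m) ν.var) :
    ∀ m ≤ n,
      BddAbove (tvSet (twistMomentVal (fun a b => σ a b) hb κ m μ ν)) ∧
      tvNorm (twistMomentVal (fun a b => σ a b) hb κ m μ ν)
        ≤ ∑ k ∈ Finset.range (m + 1),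
            (m.choose k : ℝ) * (∫ f, (κ f : ℝ) ^ (m - k) ∂μ.var)
              * (∫ g, (κ g : ℝ) ^ k ∂ν.var) :=
  twisted_convolution_moments_general σ κ hκ_meas n hb μ ν hμ hν
end

section
/- Suppose the seminorm $\varsigma$ dominates $\sigma$ in the sense $|\sigma(f,g)| \le c\, \varsigma(f)\varsigma(g)$ for all $f,g \in E$. If $\mu, \nu$ are finite complex Borel measures with $\int_E \varsigma(f)\, d|\mu|(f) < \infty$ and $\int_E \varsigma(g)\, d|\nu|(g) < \infty$, then the Poisson bracket measure $\{\mu,\nu\}_0(\Lambda) := \int_E \int_E \sigma(f,g) \mathbf{1}_\Lambda(f+g)\, d\mu(f)\, d\nu(g)$ is a well-defined finite complex measure with $\|\{\mu,\nu\}_0\|_1 \le c \left(\int \varsigma\, d|\mu|\right)\left(\int \varsigma\, d|\nu|\right)$. -/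
open MeasureTheory Complex Filter

/-!
The measure `σ(f,g) dμ(f) dν(g)` on `E × E` has a density `H` with respect to `|μ| ⊗ |ν|`, and
the domination `|σ(f,g)| ≤ c ς(f) ς(g)` makes `H` integrable with
`∫ |H| ≤ c (∫ ς d|μ|) (∫ ς d|ν|)`. The Poisson bracket is the pushforward of `H · (|μ| ⊗ |ν|)`
under addition. Its density with respect to the pushforward of `|μ| ⊗ |ν|` is the conditional
expectation of `H` given `f + g`, and conditional expectation is an `L¹` contraction, so the
bound on `∫ |H|` carries over to the total variation of the bracket.
-/

theorem exists_setIntegral_map_eq_setIntegral_preimage {X Y F : Type*} [MeasurableSpace X]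
    [MeasurableSpace Y] [NormedAddCommGroup F] [NormedSpace ℝ F] [CompleteSpace F]
    {κ : Measure X} [IsFiniteMeasure κ] {φ : X → Y} (hφ : Measurable φ) {u : X → F}
    (hu : Integrable u κ) :
    ∃ G : Y → F, StronglyMeasurable G ∧ Integrable G (κ.map φ) ∧
      (∀ Λ, MeasurableSet Λ → ∫ y in Λ, G y ∂κ.map φ = ∫ x in φ ⁻¹' Λ, u x ∂κ) ∧
      ∫ y, ‖G y‖ ∂κ.map φ ≤ ∫ x, ‖u x‖ ∂κ := by
  obtain ⟨G, hG, hGφ⟩ := (stronglyMeasurable_condExp (m := MeasurableSpace.comap φ ‹_›)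
    (μ := κ) (f := u)).exists_eq_measurable_comp
  have hGmap : AEStronglyMeasurable G (κ.map φ) := hG.aestronglyMeasurable
  refine ⟨G, hG, ?_, fun Λ hΛ => ?_, ?_⟩
  · rw [integrable_map_measure hGmap hφ.aemeasurable, ← hGφ]
    exact integrable_condExp
  · rw [setIntegral_map hΛ hGmap hφ.aemeasurable,
      ← setIntegral_condExp hφ.comap_le hu ⟨Λ, hΛ, rfl⟩]
    simp only [hGφ, Function.comp_apply]
  · rw [integral_map hφ.aemeasurable hGmap.norm]
    have h := integral_norm_condExp_le (m := MeasurableSpace.comap φ ‹_›) (μ := κ) u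
    rwa [hGφ] at h

namespace CMeasure

instance isFiniteMeasure_var {E : Type*} [MeasurableSpace E] (μ : CMeasure E) :
    IsFiniteMeasure μ.var :=
  μ.finite

noncomputable def ofDensity {E : Type*} [MeasurableSpace E] (m : Measure E) [IsFiniteMeasure m]
    (G : E → ℂ) (hG : Measurable G) (hGi : Integrable G m) : CMeasure E where
  var := m.withDensity fun x => ‖G x‖₊
  finite := isFiniteMeasure_withDensity hGi.hasFiniteIntegral.ne
  density x := exp (arg (G x) * I)
  meas_density := by fun_prop
  norm_density x := norm_exp_ofReal_mul_I _

variable {E : Type*} [MeasurableSpace E] {m : Measure E} [IsFiniteMeasure m] {G : E → ℂ}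
  (hG : Measurable G) (hGi : Integrable G m)

theorem val_ofDensity {Λ : Set E} (hΛ : MeasurableSet Λ) :
    (ofDensity m G hG hGi).val Λ = ∫ x in Λ, G x ∂m := by
  simp only [val, ofDensity]
  rw [setIntegral_withDensity_eq_setIntegral_smul hG.nnnorm _ hΛ]
  refine setIntegral_congr_fun hΛ fun x _ => ?_
  simp only [NNReal.smul_def, coe_nnnorm, real_smul, norm_mul_exp_arg_mul_I]

theorem norm1_ofDensity : (ofDensity m G hG hGi).norm1 = ∫ x, ‖G x‖ ∂m := by
  rw [integral_norm_eq_lintegral_enorm hG.aestronglyMeasurable]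
  simp only [norm1, ofDensity, withDensity_apply _ MeasurableSet.univ, Measure.restrict_univ]
  rfl

end CMeasure

section PoissonBracket

variable {E : Type*} [MeasurableSpace E]

/-- The density of the complex measure `σ(f,g) dμ(f) dν(g)` on `E × E` with respect to
`|μ| ⊗ |ν|`. -/
noncomputable def bracketDensity (σ : E → E → ℝ) (μ ν : CMeasure E) (p : E × E) : ℂ :=
  (σ p.1 p.2 : ℂ) * μ.density p.1 * ν.density p.2

theorem norm_bracketDensity (σ : E → E → ℝ) (μ ν : CMeasure E) (p : E × E) :
    ‖bracketDensity σ μ ν p‖ = |σ p.1 p.2| := by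
  simp [bracketDensity, μ.norm_density, ν.norm_density]

variable {σ : E → E → ℝ} {ς : E → ℝ} {c : ℝ} {μ ν : CMeasure E}

theorem integrable_bracketDensity (hσ : Measurable fun p : E × E => σ p.1 p.2)
    (hdom : ∀ f g, |σ f g| ≤ c * ς f * ς g)
    (hμ : Integrable ς μ.var) (hν : Integrable ς ν.var) :
    Integrable (bracketDensity σ μ ν) (μ.var.prod ν.var) := by
  have hmeas : Measurable (bracketDensity σ μ ν) := by
    unfold bracketDensity
    have := μ.meas_density
    have := ν.meas_density
    fun_prop
  refine ((hμ.const_mul c).mul_prod hν).mono hmeas.aestronglyMeasurable (ae_of_all _ fun p => ?_)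
  rw [norm_bracketDensity]
  exact (hdom p.1 p.2).trans (le_abs_self _)

theorem integral_norm_bracketDensity_le (hdom : ∀ f g, |σ f g| ≤ c * ς f * ς g)
    (hμ : Integrable ς μ.var) (hν : Integrable ς ν.var) :
    ∫ p, ‖bracketDensity σ μ ν p‖ ∂μ.var.prod ν.var ≤ c * (∫ f, ς f ∂μ.var) * ∫ g, ς g ∂ν.var := by
  have hdom_int : Integrable (fun p : E × E => c * ς p.1 * ς p.2) (μ.var.prod ν.var) :=
    (hμ.const_mul c).mul_prod hν
  calc ∫ p, ‖bracketDensity σ μ ν p‖ ∂μ.var.prod ν.var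
      ≤ ∫ p : E × E, c * ς p.1 * ς p.2 ∂μ.var.prod ν.var := by
        exact integral_mono_of_nonneg (ae_of_all _ fun _ => norm_nonneg _) hdom_int
          (ae_of_all _ fun p => (norm_bracketDensity σ μ ν p).trans_le (hdom p.1 p.2))
    _ = c * (∫ f, ς f ∂μ.var) * ∫ g, ς g ∂ν.var := by
        rw [integral_prod_mul (fun f => c * ς f) ς, integral_const_mul]

theorem pbVal_eq_setIntegral_bracketDensity [Add E] [MeasurableAdd₂ E]
    (hH : Integrable (bracketDensity σ μ ν) (μ.var.prod ν.var)) {Λ : Set E}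
    (hΛ : MeasurableSet Λ) :
    pbVal σ μ ν Λ =
      ∫ p in (fun p : E × E => p.1 + p.2) ⁻¹' Λ, bracketDensity σ μ ν p ∂μ.var.prod ν.var := by
  have hind : (fun p : E × E => bracketDensity σ μ ν p * cind Λ (p.1 + p.2)) =
      ((fun p : E × E => p.1 + p.2) ⁻¹' Λ).indicator (bracketDensity σ μ ν) := by
    ext p
    by_cases hp : p.1 + p.2 ∈ Λ <;> simp [cind, hp]
  have hHΛ : Integrable (fun p : E × E => bracketDensity σ μ ν p * cind Λ (p.1 + p.2))
      (μ.var.prod ν.var) := by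
    rw [hind]
    exact hH.indicator (measurable_add hΛ)
  rw [← integral_indicator (measurable_add hΛ), ← hind, integral_prod _ hHΛ]
  simp only [pbVal, CMeasure.integral, ← integral_mul_const]
  congr 1 with f
  congr 1 with g
  simp only [bracketDensity]
  ring

end PoissonBracket

theorem poisson_bracket_well_defined_general
    {E : Type*} [AddCommGroup E] [Module ℝ E] [MeasurableSpace E] [MeasurableAdd₂ E]
    (σ : E →ₗ[ℝ] E →ₗ[ℝ] ℝ)
    (hσ_meas : Measurable fun p : E × E => σ p.1 p.2)
    (ς : Seminorm ℝ E)
    (c : ℝ) (hdom : ∀ f g : E, |σ f g| ≤ c * ς f * ς g)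
    (μ ν : CMeasure E)
    (hμ : MeasureTheory.Integrable (fun f : E => (ς f : ℝ)) μ.var)
    (hν : MeasureTheory.Integrable (fun g : E => (ς g : ℝ)) ν.var) :
    ∃ ρ : CMeasure E,
      (∀ Λ : Set E, MeasurableSet Λ → ρ.val Λ = pbVal (fun a b => σ a b) μ ν Λ) ∧
      ρ.norm1 ≤ c * (∫ f, (ς f : ℝ) ∂μ.var) * (∫ g, (ς g : ℝ) ∂ν.var) := by
  have hH := integrable_bracketDensity (σ := fun a b => σ a b) hσ_meas hdom hμ hν
  obtain ⟨G, hG, hGi, hG_val, hG_norm⟩ :=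
    exists_setIntegral_map_eq_setIntegral_preimage measurable_add hH
  refine ⟨CMeasure.ofDensity _ G hG.measurable hGi, fun Λ hΛ => ?_, ?_⟩
  · rw [CMeasure.val_ofDensity _ _ hΛ, hG_val Λ hΛ, pbVal_eq_setIntegral_bracketDensity hH hΛ]
  · rw [CMeasure.norm1_ofDensity]
    exact hG_norm.trans (integral_norm_bracketDensity_le hdom hμ hν)

/-- if `|σ(f,g)| ≤ c ς(f) ς(g)` and `μ, ν` have finite first ς-moments,
then the Poisson bracket `{μ,ν}₀(Λ) = ∫∫ σ(f,g) 1_Λ(f+g) dμ(f) dν(g)` is a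
well-defined finite complex measure with `‖{μ,ν}₀‖₁ ≤ c (∫ ς d|μ|)(∫ ς d|ν|)`. -/
theorem poisson_bracket_well_defined
    {E : Type*} [AddCommGroup E] [Module ℝ E] [MeasurableSpace E] [MeasurableAdd₂ E]
    (σ : E →ₗ[ℝ] E →ₗ[ℝ] ℝ) (hσ_anti : ∀ f g : E, σ f g = - σ g f)
    (hσ_meas : Measurable fun p : E × E => σ p.1 p.2)
    (ς : Seminorm ℝ E) (hς_meas : Measurable fun f : E => (ς f : ℝ))
    (c : ℝ) (hc : 0 < c) (hdom : ∀ f g : E, |σ f g| ≤ c * ς f * ς g)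
    (μ ν : CMeasure E)
    (hμ : MeasureTheory.Integrable (fun f : E => (ς f : ℝ)) μ.var)
    (hν : MeasureTheory.Integrable (fun g : E => (ς g : ℝ)) ν.var) :
    ∃ ρ : CMeasure E,
      (∀ Λ : Set E, MeasurableSet Λ → ρ.val Λ = pbVal (fun a b => σ a b) μ ν Λ) ∧
      ρ.norm1 ≤ c * (∫ f, (ς f : ℝ) ∂μ.var) * (∫ g, (ς g : ℝ) ∂ν.var) :=
  poisson_bracket_well_defined_general σ hσ_meas ς c hdom μ ν hμ hν
end
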